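/- For every state i and every positive integer θ, writing Ê = E_i[min(T_i, θ)], one has (1 − P_i(T_i > θ))/Ê − π_i = (1/Ê) · ( π_i · Σ_{q ∈ Σ, q ≠ i} P_i(X_θ = q and T_i > θ) · E_q[T_i] − P_i(T_i > θ) ). (This is the identity (1 − P_i(T_i > θ))/E_i[T̂_i^{(t)}] − π_i = (P_i(T_i > θ)/E_i[T̂_i^{(t)}])·(Γ_i − 1) of the paper, with Γ_i rewritten via Z_ii − Z_qi = π_i E_q[T_i].) -/

import Mathlib

/-!
Restarting the chain at time `θ` on the event `{X_θ = q, T_i > θ}` splits the return time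
pathwise as `T_i = min(T_i, θ) + T_i ∘ shift θ`, and the Markov property turns this into
`E_i[T_i] = E_i[min(T_i, θ)] + Σ_{q ≠ i} P_i(X_θ = q, T_i > θ) E_q[T_i]`.
Since `π_i = 1 / E_i[T_i]`, the identity is a rearrangement of this one.

The Markov property `P_x(E ∩ shift n ⁻¹' F) = P_x(E) P_q(F)` for `E ⊆ {X_n = q}` depending on the
first `n + 1` steps is proved for cylinders `F` by induction on their length, using only the
one-step law of the chain; it then holds for every `F` depending on finitely many steps, and for
every measurable `F` by the π-λ theorem.
-/

open MeasureTheory ProbabilityTheory Finset Set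
open scoped ENNReal NNReal Classical

namespace LocalStationary

noncomputable section

/-- First return time (≥ 1) of a trajectory `f` to the state `i`, valued in `ℕ∞`
(it equals `⊤` if the trajectory never returns to `i`). -/
def hit {S : Type*} (i : S) (f : ℕ → S) : ℕ∞ :=
  sInf {n : ℕ∞ | ∃ m : ℕ, n = m ∧ 1 ≤ m ∧ f m = i}

/-- Truncated return time `min(T_i, θ)` as a natural number. -/
def truncHit {S : Type*} (i : S) (θ : ℕ) (f : ℕ → S) : ℕ :=
  (min (hit i f) (θ : ℕ∞)).toNat

/-- Number of visits to `j` among the first `min(T_i, θ)` steps of the trajectory. -/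
def visits {S : Type*} (i j : S) (θ : ℕ) (f : ℕ → S) : ℕ :=
  ((Finset.Icc 1 (truncHit i θ f)).filter fun s => f s = j).card

/-- A discrete-time time-homogeneous Markov chain on a state space `S`, described by
the laws `μ x` of its trajectories started at each state `x`, together with its
transition matrix `trans`. -/
structure Chain (S : Type*) [MeasurableSpace S] where
  μ : S → Measure (ℕ → S)
  isProb : ∀ x, IsProbabilityMeasure (μ x)
  start : ∀ x, μ x {f | f 0 = x} = 1
  trans : S → S → ℝ≥0∞
  trans_sum : ∀ x, ∑' y, trans x y = 1
  markov : ∀ x (n : ℕ) (s : ℕ → S),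
    μ x {f | ∀ k ≤ n + 1, f k = s k} =
      μ x {f | ∀ k ≤ n, f k = s k} * trans (s n) (s (n + 1))

namespace Chain

variable {S : Type*} [MeasurableSpace S]

/-- Irreducibility: from every state one can reach every other state. -/
def Irreducible (C : Chain S) : Prop :=
  ∀ x y : S, ∃ n : ℕ, 0 < C.μ x {f | f n = y}

/-- Positive recurrence: the return time to each state is almost surely finite and
has finite expectation. -/
def PositiveRecurrent (C : Chain S) : Prop :=
  ∀ x : S, C.μ x {f | hit x f = ⊤} = 0 ∧
    Integrable (fun f => ((hit x f).toNat : ℝ)) (C.μ x)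

/-- Aperiodicity: for each state, the only common divisor of the possible return
times is `1`. -/
def Aperiodic (C : Chain S) : Prop :=
  ∀ x : S, ∀ d : ℕ, (∀ n : ℕ, 1 ≤ n → 0 < C.μ x {f | f n = x} → d ∣ n) → d ∣ 1

/-- `E_x[T_i]`, the expected hitting time of `i` starting from `x`. -/
def ERet (C : Chain S) (x i : S) : ℝ :=
  ∫ f, ((hit i f).toNat : ℝ) ∂ C.μ x

/-- The stationary probability `π_i = 1 / E_i[T_i]`. -/
def statPi (C : Chain S) (i : S) : ℝ := (C.ERet i i)⁻¹

/-- The truncated mean `E_i[min(T_i, θ)]`. -/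
def EThat (C : Chain S) (i : S) (θ : ℕ) : ℝ :=
  ∫ f, (truncHit i θ f : ℝ) ∂ C.μ i

/-- `E_i[F̂_j] = E_i[Σ_{s=1}^{min(T_i,θ)} 1{X_s = j}]`. -/
def EVisits (C : Chain S) (i j : S) (θ : ℕ) : ℝ :=
  ∫ f, (visits i j θ f : ℝ) ∂ C.μ i

/-- `P_i(T_i > k)`, as a real number. -/
def tailP (C : Chain S) (i : S) (k : ℕ) : ℝ :=
  (C.μ i {f | (k : ℕ∞) < hit i f}).toReal

/-- The maximal hitting time `H_i = max_x E_x[T_i]`. -/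
def maxHit (C : Chain S) (i : S) : ℝ := ⨆ x : S, C.ERet x i

/-- Entry `Z_{jk} = Σ_{t=0}^∞ (P^{(t)}_{jk} − π_k)` of the fundamental matrix. -/
def Zfun (C : Chain S) (j k : S) : ℝ :=
  ∑' t : ℕ, ((C.μ j {f | f t = k}).toReal - C.statPi k)

/-- `Z_max(i) = max_k |Z_{ki}|`. -/
def Zmax (C : Chain S) (i : S) : ℝ := ⨆ k : S, |C.Zfun k i|

end Chain

def cyl {S : Type*} (N : ℕ) (g : ℕ → S) : Set (ℕ → S) := {f | ∀ k ≤ N, f k = g k}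

def shift {S : Type*} (n : ℕ) (f : ℕ → S) : ℕ → S := fun k => f (n + k)

def excursionAt {S : Type*} (i : S) (θ : ℕ) (q : S) : Set (ℕ → S) :=
  {f | f θ = q ∧ (θ : ℕ∞) < hit i f}

section Cylinders

variable {S : Type*} {N : ℕ} (g : ℕ → S) (y : S)

lemma cyl_inter_coord_succ :
    cyl N g ∩ {f | f (N + 1) = y} = cyl (N + 1) (Function.update g (N + 1) y) := by
  ext f
  constructor
  · rintro ⟨hf, hy⟩ k hk
    rcases Nat.le_succ_iff.1 hk with hk | rfl
    · rw [Function.update_of_ne (by omega)]; exact hf k hk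
    · rw [Function.update_self]; exact hy
  · intro hf
    refine ⟨fun k hk => ?_, ?_⟩
    · rw [hf k (by omega), Function.update_of_ne (by omega)]
    · rw [Set.mem_ofPred_eq, hf _ le_rfl, Function.update_self]

lemma cyl_update_succ : cyl N (Function.update g (N + 1) y) = cyl N g := by
  ext f
  exact forall₂_congr fun k hk => by rw [Function.update_of_ne (by omega)]

end Cylinders

section ReturnTime

variable {S : Type*} {i : S} {f : ℕ → S}

lemma lt_hit_iff (k : ℕ) : (k : ℕ∞) < hit i f ↔ ∀ m : ℕ, 1 ≤ m → m ≤ k → f m ≠ i := by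
  constructor
  · intro h m hm hmk hfm
    have : hit i f ≤ m := sInf_le ⟨m, rfl, hm, hfm⟩
    exact absurd (h.trans_le this) (by exact_mod_cast hmk.not_gt)
  · intro h
    refine (ENat.add_one_le_iff (ENat.natCast_ne_top k)).1 (le_sInf ?_)
    rintro _ ⟨m, rfl, hm, hfm⟩
    have : k < m := by by_contra! hmk; exact h m hm hmk hfm
    exact_mod_cast this

lemma hit_ne_zero : hit i f ≠ 0 := by
  have := (lt_hit_iff (i := i) (f := f) 0).2 fun m hm h0 => by omega
  exact_mod_cast this.ne'

lemma hit_eq_natCast_iff {n : ℕ} (hn : 1 ≤ n) :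
    hit i f = n ↔ f n = i ∧ ∀ m : ℕ, 1 ≤ m → m < n → f m ≠ i := by
  obtain ⟨k, rfl⟩ : ∃ k, n = k + 1 := ⟨n - 1, by omega⟩
  have hlt : hit i f = (k + 1 : ℕ) ↔ (k : ℕ∞) < hit i f ∧ ¬ ((k + 1 : ℕ) : ℕ∞) < hit i f := by
    rw [← ENat.add_one_le_iff (ENat.natCast_ne_top k), not_lt, le_antisymm_iff, and_comm]
    push_cast; rfl
  rw [hlt, lt_hit_iff, lt_hit_iff]
  constructor
  · rintro ⟨hbefore, hnow⟩
    push Not at hnow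
    obtain ⟨m, hm, hmk, hfm⟩ := hnow
    obtain rfl : m = k + 1 := by by_contra hne; exact hbefore m hm (by omega) hfm
    exact ⟨hfm, fun m hm hmk => hbefore m hm (by omega)⟩
  · rintro ⟨hnow, hbefore⟩
    exact ⟨fun m hm hmk => hbefore m hm (by omega), fun h => h (k + 1) (by omega) le_rfl hnow⟩

lemma exists_hit_eq_of_hit_le {θ : ℕ} (h : hit i f ≤ θ) :
    ∃ n : ℕ, 1 ≤ n ∧ n ≤ θ ∧ hit i f = n := by
  lift hit i f to ℕ using ne_top_of_le_ne_top (ENat.natCast_ne_top θ) h with n hn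
  exact ⟨n, Nat.one_le_iff_ne_zero.2 (by exact_mod_cast hn ▸ hit_ne_zero), by exact_mod_cast h,
    rfl⟩

lemma truncHit_of_lt_hit {θ : ℕ} (h : (θ : ℕ∞) < hit i f) : truncHit i θ f = θ := by
  simp [truncHit, min_eq_right h.le]

lemma truncHit_of_hit_eq {θ n : ℕ} (h : hit i f = n) (hn : n ≤ θ) : truncHit i θ f = n := by
  simp [truncHit, h, hn]

lemma truncHit_le (θ : ℕ) : truncHit i θ f ≤ θ := by
  rcases lt_or_ge (θ : ℕ∞) (hit i f) with h | h
  · rw [truncHit_of_lt_hit h]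
  · obtain ⟨n, -, hnθ, hfn⟩ := exists_hit_eq_of_hit_le h
    rwa [truncHit_of_hit_eq hfn hnθ]

lemma one_le_truncHit {θ : ℕ} (hθ : 1 ≤ θ) : 1 ≤ truncHit i θ f := by
  rcases lt_or_ge (θ : ℕ∞) (hit i f) with h | h
  · rwa [truncHit_of_lt_hit h]
  · obtain ⟨n, hn, hnθ, hfn⟩ := exists_hit_eq_of_hit_le h
    rwa [truncHit_of_hit_eq hfn hnθ]

lemma hit_shift_eq_iff {θ m : ℕ} (h : (θ : ℕ∞) < hit i f) (hm : 1 ≤ m) :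
    hit i (shift θ f) = m ↔ hit i f = (θ + m : ℕ) := by
  rw [hit_eq_natCast_iff hm, hit_eq_natCast_iff (by omega), lt_hit_iff] at *
  refine and_congr_right fun _ =>
    ⟨fun hs k hk hkm => ?_, fun hf k hk hkm => hf (θ + k) (by omega) (by omega)⟩
  rcases le_or_gt k θ with hkθ | hkθ
  · exact h k hk hkθ
  · simpa [shift, show θ + (k - θ) = k by omega] using hs (k - θ) (by omega) (by omega)

lemma dependsOn_lt_hit (k : ℕ) : DependsOn (fun f : ℕ → S => (k : ℕ∞) < hit i f) (Set.Iic k) :=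
  fun f f' h => propext <| by
    simp only [lt_hit_iff]
    exact forall₃_congr fun m _ hm => by rw [h m hm]

lemma dependsOn_hit_eq {n : ℕ} (hn : 1 ≤ n) :
    DependsOn (fun f : ℕ → S => hit i f = n) (Set.Iic n) := fun f f' h => propext <| by
  simp only [hit_eq_natCast_iff hn, h n Set.self_mem_Iic]
  exact and_congr_right fun _ => forall₃_congr fun m _ hm => by
    rw [h m (Set.mem_Iic.2 hm.le)]

lemma dependsOn_truncHit (θ : ℕ) : DependsOn (truncHit i θ) (Set.Iic θ) := fun f f' h => by
  rcases lt_or_ge (θ : ℕ∞) (hit i f) with hf | hf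
  · rw [truncHit_of_lt_hit hf, truncHit_of_lt_hit ((dependsOn_lt_hit θ h).mp hf)]
  · obtain ⟨n, hn, hnθ, hfn⟩ := exists_hit_eq_of_hit_le hf
    have hf'n : hit i f' = n := (dependsOn_hit_eq hn fun k hk =>
      h k (Set.mem_Iic.2 ((Set.mem_Iic.1 hk).trans hnθ))).mp hfn
    rw [truncHit_of_hit_eq hfn hnθ, truncHit_of_hit_eq hf'n hnθ]

lemma dependsOn_mem_excursionAt (θ : ℕ) (q : S) :
    DependsOn (· ∈ excursionAt i θ q) (Set.Iic θ) := fun f f' h => propext <| by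
  simp only [excursionAt, Set.mem_ofPred_eq, h θ Set.self_mem_Iic,
    (dependsOn_lt_hit θ h).to_iff]

lemma toNat_hit_eq_truncHit_add_tsum (hf : hit i f ≠ ⊤) (θ : ℕ) :
    ((hit i f).toNat : ℝ≥0∞) = truncHit i θ f +
      ∑' q, (excursionAt i θ q).indicator (fun g => ((hit i (shift θ g)).toNat : ℝ≥0∞)) f := by
  rw [tsum_eq_single (f θ) fun q hq => Set.indicator_of_notMem (fun hfq => hq hfq.1.symm) _]
  lift hit i f to ℕ using hf with n hn
  rcases lt_or_ge θ n with hθ | hθ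
  · have hlt : (θ : ℕ∞) < hit i f := by rw [← hn]; exact_mod_cast hθ
    rw [Set.indicator_of_mem (s := excursionAt i θ (f θ)) ⟨rfl, hlt⟩, truncHit_of_lt_hit hlt,
      (hit_shift_eq_iff hlt (m := n - θ) (by omega)).2 (by rw [← hn]; congr 1; omega)]
    simp only [ENat.toNat_natCast]
    norm_cast
    omega
  · rw [Set.indicator_of_notMem fun hf => (hn ▸ hf.2).not_ge (by exact_mod_cast hθ),
      truncHit_of_hit_eq hn.symm hθ, add_zero, ENat.toNat_natCast]

lemma excursionAt_self {θ : ℕ} (hθ : 1 ≤ θ) : excursionAt i θ i = ∅ :=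
  Set.eq_empty_of_forall_notMem fun _ hf => (lt_hit_iff θ).1 hf.2 θ hθ le_rfl hf.1

end ReturnTime

section FinitelyDetermined

variable {S : Type*} {N : ℕ}

lemma dependsOn_mem_cyl (g : ℕ → S) : DependsOn (· ∈ cyl N g) (Set.Iic N) :=
  fun f f' h => propext <| forall₂_congr fun k hk => by rw [h k hk]

lemma preimage_domRestrict_image_of_dependsOn {G : Set (ℕ → S)}
    (hG : DependsOn (· ∈ G) (Set.Iic N)) :
    (Set.Iic N).domRestrict ⁻¹' ((Set.Iic N).domRestrict '' G) = G := by
  refine Set.Subset.antisymm ?_ (Set.subset_preimage_image _ _)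
  rintro f ⟨g, hg, hgf⟩
  exact (hG fun k hk => congrFun hgf ⟨k, hk⟩).mp hg

lemma DependsOn.mem_inter {s : Set ℕ} {A B : Set (ℕ → S)} (hA : DependsOn (· ∈ A) s)
    (hB : DependsOn (· ∈ B) s) : DependsOn (· ∈ A ∩ B) s := fun f f' h => by
  show (f ∈ A ∧ f ∈ B) = (f' ∈ A ∧ f' ∈ B)
  rw [show (f ∈ A) = (f' ∈ A) from hA h, show (f ∈ B) = (f' ∈ B) from hB h]

lemma DependsOn.mem_shift_preimage {m : ℕ} {F : Set (ℕ → S)}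
    (hF : DependsOn (· ∈ F) (Set.Iic m)) (n : ℕ) :
    DependsOn (· ∈ shift n ⁻¹' F) (Set.Iic (n + m)) := fun f f' h =>
  hF fun k hk => h (n + k) (Set.mem_Iic.2 (by simp only [Set.mem_Iic] at hk; omega))

variable [MeasurableSpace S]

lemma measurable_shift (n : ℕ) : Measurable (shift (S := S) n) :=
  measurable_pi_lambda _ fun k => measurable_pi_apply (n + k)

lemma measurable_domRestrict_Iic : Measurable ((Set.Iic N).domRestrict (π := fun _ : ℕ => S)) :=
  measurable_pi_lambda _ fun k => measurable_pi_apply (k : ℕ)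

variable [MeasurableSingletonClass S] [Countable S]

lemma measurableSet_of_dependsOn {G : Set (ℕ → S)} (hG : DependsOn (· ∈ G) (Set.Iic N)) :
    MeasurableSet G := by
  rw [← preimage_domRestrict_image_of_dependsOn hG]
  exact measurable_domRestrict_Iic (Set.to_countable _).measurableSet

lemma measurable_of_dependsOn {β : Type*} [MeasurableSpace β] {φ : (ℕ → S) → β}
    (hφ : DependsOn φ (Set.Iic N)) : Measurable φ := fun t _ =>
  measurableSet_of_dependsOn (N := N) fun f g hfg => by simp only [Set.mem_preimage, hφ hfg]

lemma measurableSet_cyl (g : ℕ → S) : MeasurableSet (cyl N g) :=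
  measurableSet_of_dependsOn (dependsOn_mem_cyl g)

lemma measure_eq_of_forall_cyl {μ ν : Measure (ℕ → S)} (h : ∀ g, μ (cyl N g) = ν (cyl N g))
    {G : Set (ℕ → S)} (hG : DependsOn (· ∈ G) (Set.Iic N)) : μ G = ν G := by
  -- On the countable space of prefixes, measures are determined by atoms (fibres: cylinders).
  set r := (Set.Iic N).domRestrict (π := fun _ : ℕ => S)
  have hmap : μ.map r = ν.map r := by
    refine Measure.ext_of_singleton fun v => ?_
    rw [Measure.map_apply measurable_domRestrict_Iic (measurableSet_singleton v),
      Measure.map_apply measurable_domRestrict_Iic (measurableSet_singleton v)]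
    rcases (r ⁻¹' {v}).eq_empty_or_nonempty with hv | ⟨g, hg⟩
    · rw [hv, measure_empty, measure_empty]
    · have : r ⁻¹' {v} = cyl N g := by
        ext f
        simp only [Set.mem_preimage, Set.mem_singleton_iff, ← show r g = v from hg, cyl,
          Set.mem_ofPred_eq, funext_iff, Subtype.forall, Set.mem_Iic]
        rfl
      rw [this, h]
  rw [← preimage_domRestrict_image_of_dependsOn hG,
    ← Measure.map_apply measurable_domRestrict_Iic (Set.to_countable _).measurableSet, hmap,
    Measure.map_apply measurable_domRestrict_Iic (Set.to_countable _).measurableSet]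

lemma measurable_truncHit (i : S) (θ : ℕ) : Measurable (truncHit i θ) :=
  measurable_of_dependsOn (dependsOn_truncHit θ)

lemma measurable_toNat_hit (i : S) : Measurable fun f : ℕ → S => (hit i f).toNat := by
  refine measurable_to_countable' fun n => ?_
  rcases Nat.eq_zero_or_pos n with rfl | hn
  · have : (fun f : ℕ → S => (hit i f).toNat) ⁻¹' {0} = ⋂ k : ℕ, {f | (k : ℕ∞) < hit i f} := by
      ext f
      simp [hit_ne_zero, ENat.eq_top_iff_forall_gt]
    rw [this]
    exact MeasurableSet.iInter fun k => measurableSet_of_dependsOn (dependsOn_lt_hit k)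
  · have : (fun f : ℕ → S => (hit i f).toNat) ⁻¹' {n} = {f | hit i f = n} := by
      ext f
      simp [ENat.toNat_eq_iff hn.ne']
    rw [this]
    exact measurableSet_of_dependsOn (dependsOn_hit_eq hn)

end FinitelyDetermined

lemma integral_natCast_eq_toReal_lintegral {α : Type*} [MeasurableSpace α] {μ : Measure α}
    {g : α → ℕ} (hg : Measurable g) :
    ∫ a, (g a : ℝ) ∂μ = (∫⁻ a, (g a : ℝ≥0∞) ∂μ).toReal := by
  rw [← integral_toReal (f := fun a => (g a : ℝ≥0∞))
    (measurable_from_top.comp hg).aemeasurable (ae_of_all _ fun a => ENNReal.natCast_lt_top (g a))]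
  simp

namespace Chain

variable {S : Type*} [MeasurableSpace S] (C : Chain S)

lemma measure_cyl_succ (x : S) (N : ℕ) (g : ℕ → S) :
    C.μ x (cyl (N + 1) g) = C.μ x (cyl N g) * C.trans (g N) (g (N + 1)) :=
  C.markov x N g

lemma measure_cyl_inter_coord_succ (x : S) (N : ℕ) (g : ℕ → S) (y : S) :
    C.μ x (cyl N g ∩ {f | f (N + 1) = y}) = C.μ x (cyl N g) * C.trans (g N) y := by
  rw [cyl_inter_coord_succ, C.measure_cyl_succ, cyl_update_succ, Function.update_self,
    Function.update_of_ne (by omega)]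

variable [MeasurableSingletonClass S] [Countable S]

lemma measure_cyl_zero (x : S) (g : ℕ → S) :
    C.μ x (cyl 0 g) = if g 0 = x then 1 else 0 := by
  have hcyl : cyl 0 g = {f | f 0 = g 0} := by simp [cyl]
  have hstart : C.μ x {f | f 0 = x} = 1 := C.start x
  have := C.isProb x
  split_ifs with hg
  · rwa [hcyl, hg]
  · refine measure_mono_null (fun f hf => ?_) ((prob_compl_eq_zero_iff
      (measurableSet_cyl (N := 0) fun _ => x)).2 (by simpa [cyl] using hstart))
    simp_all [cyl]

lemma measure_inter_coord_succ {N : ℕ} {G : Set (ℕ → S)} (hG : DependsOn (· ∈ G) (Set.Iic N))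
    {r : S} (hGr : G ⊆ {f | f N = r}) (x y : S) :
    C.μ x (G ∩ {f | f (N + 1) = y}) = C.μ x G * C.trans r y := by
  have hmeas : MeasurableSet G := measurableSet_of_dependsOn hG
  have hcyl := measure_eq_of_forall_cyl
    (μ := (C.μ x).restrict ({f | f N = r} ∩ {f | f (N + 1) = y}))
    (ν := C.trans r y • (C.μ x).restrict {f | f N = r}) ?_ hG
  · rwa [Measure.restrict_apply hmeas, Measure.smul_apply, Measure.restrict_apply hmeas,
      ← Set.inter_assoc, Set.inter_eq_left.2 hGr, smul_eq_mul, mul_comm] at hcyl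
  intro g
  rw [Measure.restrict_apply (measurableSet_cyl g), Measure.smul_apply,
    Measure.restrict_apply (measurableSet_cyl g), smul_eq_mul, ← Set.inter_assoc]
  by_cases hg : g N = r
  · have hN : cyl N g ⊆ {f | f N = r} := fun f hf => (hf N le_rfl).trans hg
    rw [Set.inter_eq_left.2 hN, C.measure_cyl_inter_coord_succ, hg, mul_comm]
  · have hempty : cyl N g ∩ {f | f N = r} = ∅ :=
      Set.eq_empty_of_forall_notMem fun f hf => hg ((hf.1 N le_rfl).symm.trans hf.2)
    simp [hempty]

lemma measure_inter_shift_cyl {n : ℕ} {E : Set (ℕ → S)} (hE : DependsOn (· ∈ E) (Set.Iic n))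
    {q : S} (hEq : E ⊆ {f | f n = q}) (x : S) (m : ℕ) (g : ℕ → S) :
    C.μ x (E ∩ shift n ⁻¹' cyl m g) = C.μ x E * C.μ q (cyl m g) := by
  induction m with
  | zero =>
    have hE0 : E ∩ shift n ⁻¹' cyl 0 g = if g 0 = q then E else ∅ := by
      ext f
      simp only [cyl, shift, Set.mem_inter_iff, Set.mem_preimage, Set.mem_ofPred_eq,
        nonpos_iff_eq_zero, forall_eq, add_zero]
      split_ifs with hg
      · exact ⟨And.left, fun hf => ⟨hf, (hEq hf).trans hg.symm⟩⟩
      · exact ⟨fun ⟨hf, hfg⟩ => hg (hfg.symm.trans (hEq hf)), False.elim⟩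
    rw [hE0, measure_cyl_zero]
    split_ifs <;> simp
  | succ m ih =>
    have hG : DependsOn (· ∈ E ∩ shift n ⁻¹' cyl m g) (Set.Iic (n + m)) :=
      DependsOn.mem_inter (hE.mono (Set.Iic_subset_Iic.2 (Nat.le_add_right n m)))
        (DependsOn.mem_shift_preimage (dependsOn_mem_cyl g) n)
    have hsucc : E ∩ shift n ⁻¹' cyl (m + 1) g =
        (E ∩ shift n ⁻¹' cyl m g) ∩ {f | f (n + m + 1) = g (m + 1)} := by
      ext f
      simp only [cyl, shift, Set.mem_inter_iff, Set.mem_preimage, Set.mem_ofPred_eq,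
        Nat.le_succ_iff, or_imp, forall_and, forall_eq, and_assoc, Nat.succ_eq_add_one,
        ← add_assoc]
    rw [hsucc, C.measure_inter_coord_succ hG (fun f hf => hf.2 m le_rfl) x, ih,
      C.measure_cyl_succ, mul_assoc]

theorem map_shift_restrict {n : ℕ} {E : Set (ℕ → S)} (hE : DependsOn (· ∈ E) (Set.Iic n))
    {q : S} (hEq : E ⊆ {f | f n = q}) (x : S) :
    ((C.μ x).restrict E).map (shift n) = C.μ x E • C.μ q := by
  have := C.isProb x
  have hcyl : ∀ m g,
      ((C.μ x).restrict E).map (shift n) (cyl m g) = (C.μ x E • C.μ q) (cyl m g) := fun m g => by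
      rw [Measure.map_apply (measurable_shift n) (measurableSet_cyl g),
        Measure.restrict_apply ((measurable_shift n) (measurableSet_cyl g)), Set.inter_comm,
        C.measure_inter_shift_cyl hE hEq, Measure.smul_apply, smul_eq_mul]
  have hdet : ∀ m F, DependsOn (· ∈ F) (Set.Iic m) →
      ((C.μ x).restrict E).map (shift n) F = (C.μ x E • C.μ q) F :=
    fun m _ hF => measure_eq_of_forall_cyl (hcyl m) hF
  refine ext_of_generate_finite _ generateFrom_measurableCylinders.symm
    isPiSystem_measurableCylinders (fun F hF => ?_) (hdet 0 Set.univ fun _ _ _ => rfl)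
  obtain ⟨t, B, -, rfl⟩ := (mem_measurableCylinders F).1 hF
  exact hdet (t.sup id) _ fun f f' h => by
    simp only [mem_cylinder]
    congr! 1
    ext k
    exact h k (Finset.le_sup (f := id) k.2)


lemma lintegral_indicator_comp_shift {n : ℕ} {E : Set (ℕ → S)}
    (hE : DependsOn (· ∈ E) (Set.Iic n)) {q : S} (hEq : E ⊆ {f | f n = q}) (x : S)
    {φ : (ℕ → S) → ℝ≥0∞} (hφ : Measurable φ) :
    ∫⁻ f, E.indicator (fun g => φ (shift n g)) f ∂C.μ x = C.μ x E * ∫⁻ f, φ f ∂C.μ q := by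
  rw [lintegral_indicator (measurableSet_of_dependsOn hE),
    ← lintegral_map hφ (measurable_shift n), C.map_shift_restrict hE hEq, lintegral_smul_measure,
    smul_eq_mul]

theorem lintegral_hit_eq (x i : S) (θ : ℕ) (hx : C.μ x {f | hit i f = ⊤} = 0) :
    ∫⁻ f, ((hit i f).toNat : ℝ≥0∞) ∂C.μ x = ∫⁻ f, (truncHit i θ f : ℝ≥0∞) ∂C.μ x +
      ∑' q, C.μ x (excursionAt i θ q) * ∫⁻ f, ((hit i f).toNat : ℝ≥0∞) ∂C.μ q := by
  have hφ : Measurable fun f : ℕ → S => ((hit i f).toNat : ℝ≥0∞) :=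
    measurable_from_top.comp (measurable_toNat_hit i)
  have htrunc : Measurable fun f : ℕ → S => (truncHit i θ f : ℝ≥0∞) :=
    measurable_from_top.comp (measurable_truncHit i θ)
  have hterm : ∀ q, AEMeasurable ((excursionAt i θ q).indicator
      fun g => ((hit i (shift θ g)).toNat : ℝ≥0∞)) (C.μ x) := fun q =>
    ((hφ.comp (measurable_shift θ)).indicator
      (measurableSet_of_dependsOn (dependsOn_mem_excursionAt θ q))).aemeasurable
  have hfin : ∀ᵐ f ∂C.μ x, hit i f ≠ ⊤ := measure_eq_zero_iff_ae_notMem.1 hx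
  rw [lintegral_congr_ae (hfin.mono fun f hf => toNat_hit_eq_truncHit_add_tsum hf θ),
    lintegral_add_left htrunc, lintegral_tsum hterm]
  congr 1
  exact tsum_congr fun q => C.lintegral_indicator_comp_shift
    (dependsOn_mem_excursionAt θ q) (fun f hf => hf.1) x hφ

theorem ERet_self_eq_EThat_add_tsum (i : S) (θ : ℕ) (hfin : C.μ i {f | hit i f = ⊤} = 0)
    (hint : Integrable (fun f => ((hit i f).toNat : ℝ)) (C.μ i)) :
    C.ERet i i = C.EThat i θ + ∑' q, (C.μ i (excursionAt i θ q)).toReal * C.ERet q i := by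
  have hkey := C.lintegral_hit_eq i i θ hfin
  have hE : ∫⁻ f, ((hit i f).toNat : ℝ≥0∞) ∂C.μ i ≠ ⊤ := by
    simpa using hint.lintegral_lt_top.ne
  rw [hkey] at hE
  rw [ERet, EThat, integral_natCast_eq_toReal_lintegral (measurable_toNat_hit i),
    integral_natCast_eq_toReal_lintegral (measurable_truncHit i θ), hkey,
    ENNReal.toReal_add (ENNReal.add_ne_top.1 hE).1 (ENNReal.add_ne_top.1 hE).2,
    ENNReal.tsum_toReal_eq (ENNReal.ne_top_of_tsum_ne_top (ENNReal.add_ne_top.1 hE).2)]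
  simp only [ENNReal.toReal_mul, ERet,
    integral_natCast_eq_toReal_lintegral (measurable_toNat_hit i)]

lemma one_le_EThat (i : S) {θ : ℕ} (hθ : 1 ≤ θ) : 1 ≤ C.EThat i θ := by
  have := C.isProb i
  have hint : Integrable (fun f => (truncHit i θ f : ℝ)) (C.μ i) :=
    .of_bound (measurable_from_top.comp (measurable_truncHit i θ)).aestronglyMeasurable θ
      (ae_of_all _ fun f => by simpa using truncHit_le θ)
  calc (1 : ℝ) = ∫ _, (1 : ℝ) ∂C.μ i := by simp
    _ ≤ C.EThat i θ := integral_mono (integrable_const 1) hint fun f =>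
        Nat.one_le_cast.2 (one_le_truncHit hθ)

end Chain

theorem statement7_general {S : Type*} [MeasurableSpace S] [MeasurableSingletonClass S] [Countable S]
    (C : Chain S) (hrec : C.PositiveRecurrent)
    (i : S) (θ : ℕ) (hθ : 1 ≤ θ) :
    (1 - C.tailP i θ) / C.EThat i θ - C.statPi i =
      (C.EThat i θ)⁻¹ *
        (C.statPi i *
            ∑' q : {q : S // q ≠ i},
              (C.μ i {f | f θ = (q : S) ∧ (θ : ℕ∞) < hit i f}).toReal * C.ERet (q : S) i -
          C.tailP i θ) := by
  obtain ⟨hfin, hint⟩ := hrec i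
  have hsum : ∑' q : {q : S // q ≠ i},
      (C.μ i {f | f θ = (q : S) ∧ (θ : ℕ∞) < hit i f}).toReal * C.ERet (q : S) i =
        C.ERet i i - C.EThat i θ := by
    rw [C.ERet_self_eq_EThat_add_tsum i θ hfin hint, add_sub_cancel_left]
    refine tsum_subtype_eq_of_support_subset (s := {q | q ≠ i})
      (f := fun q => (C.μ i (excursionAt i θ q)).toReal * C.ERet q i) fun q hq => ?_
    rintro rfl
    simp [excursionAt_self hθ] at hq
  have hT := C.one_le_EThat i hθ
  have hE : C.EThat i θ ≤ C.ERet i i := by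
    rw [← sub_nonneg, ← hsum]
    exact tsum_nonneg fun q => mul_nonneg ENNReal.toReal_nonneg
      (integral_nonneg fun f => Nat.cast_nonneg _)
  have hT0 : C.EThat i θ ≠ 0 := by linarith
  have hE0 : C.ERet i i ≠ 0 := by linarith
  rw [hsum, Chain.statPi]
  field_simp
  ring

/-- Lemma 11 of the paper, rewritten via `Z_ii − Z_qi = π_i E_q[T_i]`.
With `Ê = E_i[min(T_i, θ)]`,
`(1 − P_i(T_i > θ))/Ê − π_i = (1/Ê)·(π_i · Σ_{q ≠ i} P_i(X_θ = q, T_i > θ) E_q[T_i] − P_i(T_i > θ))`. -/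
theorem statement7 {S : Type*} [MeasurableSpace S] [MeasurableSingletonClass S] [Countable S]
    (C : Chain S) (hirr : C.Irreducible) (hrec : C.PositiveRecurrent)
    (i : S) (θ : ℕ) (hθ : 1 ≤ θ) :
    (1 - C.tailP i θ) / C.EThat i θ - C.statPi i =
      (C.EThat i θ)⁻¹ *
        (C.statPi i *
            ∑' q : {q : S // q ≠ i},
              (C.μ i {f | f θ = (q : S) ∧ (θ : ℕ∞) < hit i f}).toReal * C.ERet (q : S) i -
          C.tailP i θ) :=
  statement7_general C hrec i θ hθ

end

end LocalStationary
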